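/- Let n be odd and gcd(i,n) = 1, so that G: F_{2^n} → F_{2^n}, x ↦ x^{2^i+1} is APN. The ortho-derivative of G is π_G(x) = x^{−(2^i+1)} for x ≠ 0 and π_G(0) = 0 (with respect to the trace inner product ⟨a,x⟩ = Tr(ax)). -/

import Mathlib

def IsAPN {M N : Type*} [AddCommGroup M] [AddCommGroup N] (F : M → N) : Prop :=
  ∀ a : M, a ≠ 0 → ∀ b : N, ({x : M | F x + F (x + a) = b}).ncard ≤ 2

lemma trace_sq {n : ℕ} (y : GaloisField 2 n) :
    Algebra.trace (ZMod 2) (GaloisField 2 n) (y ^ 2) =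
      Algebra.trace (ZMod 2) (GaloisField 2 n) y := by
  let e : GaloisField 2 n ≃ₐ[ZMod 2] GaloisField 2 n :=
    AlgEquiv.ofRingEquiv (f := frobeniusEquiv (GaloisField 2 n) 2) (fun r => by
      rw [frobeniusEquiv_def, ← map_pow]
      congr 1
      fin_cases r <;> rfl)
  have := Algebra.trace_eq_of_algEquiv e y
  simpa [e, frobeniusEquiv_def, frobenius_def] using this

lemma trace_pow2 {n : ℕ} (i : ℕ) (y : GaloisField 2 n) :
    Algebra.trace (ZMod 2) (GaloisField 2 n) (y ^ 2 ^ i) =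
      Algebra.trace (ZMod 2) (GaloisField 2 n) y := by
  induction i with
  | zero => simp
  | succ k ih =>
    rw [pow_succ, pow_mul, trace_sq, ih]

theorem stmt18 {n i : ℕ} (hn : Odd n) (hi : Nat.gcd i n = 1)
    (G : GaloisField 2 n → GaloisField 2 n) (hG : ∀ x, G x = x ^ (2 ^ i + 1))
    (π : GaloisField 2 n → GaloisField 2 n)
    (hπ : ∀ x, π x = (x ^ (2 ^ i + 1))⁻¹) :
    π 0 = 0 ∧ ∀ α, α ≠ 0 → π α ≠ 0 ∧
      ∀ x, Algebra.trace (ZMod 2) (GaloisField 2 n)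
        (π α * (G x + G (x + α) + G α + G 0)) = 0 := by
  have h2 : (2 : ℕ).Prime := Nat.prime_two
  refine ⟨by simp [hπ], fun α hα => ⟨?_, fun x => ?_⟩⟩
  · rw [hπ]
    exact inv_ne_zero (pow_ne_zero _ hα)
  · have hchar : CharP (GaloisField 2 n) 2 := inferInstance
    have key : G x + G (x + α) + G α + G 0 = α * x ^ 2 ^ i + α ^ 2 ^ i * x := by
      simp only [hG]
      have hx : (x + α) ^ (2 ^ i + 1) = (x ^ 2 ^ i + α ^ 2 ^ i) * (x + α) := by
        rw [pow_succ, add_pow_char_pow]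
      rw [hx]
      have h20 : (2 : GaloisField 2 n) = 0 := CharTwo.two_eq_zero
      linear_combination (x ^ 2 ^ i * x + α ^ 2 ^ i * α) * h20
    rw [key, hπ]
    have hαp : (α : GaloisField 2 n) ^ (2 ^ i + 1) ≠ 0 := pow_ne_zero _ hα
    have : (α ^ (2 ^ i + 1))⁻¹ * (α * x ^ 2 ^ i + α ^ 2 ^ i * x)
        = (α⁻¹ * x) ^ 2 ^ i + α⁻¹ * x := by
      rw [mul_pow, ← inv_pow, pow_succ]
      have h1 : α * α⁻¹ = 1 := mul_inv_cancel₀ hα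
      have h2' : α ^ 2 ^ i * α⁻¹ ^ 2 ^ i = 1 := by rw [← mul_pow, h1, one_pow]
      linear_combination (α⁻¹ ^ 2 ^ i * x ^ 2 ^ i) * h1 + (α⁻¹ * x) * h2'
    rw [this, map_add, trace_pow2]
    rw [CharTwo.add_self_eq_zero]
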